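/- arXiv:2204.08635 — 2 statements merged into one kernel-verified Lean document; each statement's English description precedes it below -/
import Mathlib

section
/- Let n ≥ 1, α, t, p ∈ (0,∞), r ∈ (1,∞) and q ∈ [1,∞). There are constants C₁, C₂ > 0, independent of f, such that: if f : ℝⁿ → ℂ is measurable with ‖f‖_{(K̇E^{α,p}_{q,r})_t} < ∞, then there exist nonnegative reals (λ_k)_{k∈ℤ} and measurable functions (b_k)_{k∈ℤ} with supp(b_k) ⊆ B_k and ‖b_k‖_{(E_r^q)_t} ≤ C₁·2^{-kα} for every k (dyadic central (α,q,r)-blocks), such that f = ∑_{k∈ℤ} λ_k b_k almost everywhere and ∑_{k∈ℤ} λ_k^p ≤ C₂ ‖f‖_{(K̇E^{α,p}_{q,r})_t}^p. -/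
open MeasureTheory Metric Set ENNReal
open scoped NNReal

noncomputable section

abbrev En (n : ℕ) : Type := EuclideanSpace ℝ (Fin n)

/-- Slice norm `‖f‖_{(E_r^q)_t}` for `ℝ≥0∞`-valued functions. -/
def sliceNorm (n : ℕ) (t r : ℝ) (q : ℝ≥0∞) (g : En n → ℝ≥0∞) : ℝ≥0∞ :=
  if q = ∞ then
    essSup (fun x => ((volume (ball x t))⁻¹ * ∫⁻ y in ball x t, g y ^ r) ^ (1 / r)) volume
  else
    (∫⁻ x, (((volume (ball x t))⁻¹ * ∫⁻ y in ball x t, g y ^ r) ^ (1 / r)) ^ q.toReal) ^ (1 / q.toReal)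

/-- Slice norm of a complex-valued function. -/
def sliceNormC (n : ℕ) (t r : ℝ) (q : ℝ≥0∞) (f : En n → ℂ) : ℝ≥0∞ :=
  sliceNorm n t r q fun y => (‖f y‖₊ : ℝ≥0∞)

/-- The ball `B_k = {x : |x| ≤ 2^k}`. -/
def ballZ (n : ℕ) (k : ℤ) : Set (En n) := closedBall 0 ((2 : ℝ) ^ k)

/-- The shell `S_k = B_k \ B_{k-1}`. -/
def shell (n : ℕ) (k : ℤ) : Set (En n) := ballZ n k \ ballZ n (k - 1)

/-- Homogeneous Herz-slice norm of an `ℝ≥0∞`-valued function. -/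
def herzHom (n : ℕ) (t r : ℝ) (q : ℝ≥0∞) (α : ℝ) (p : ℝ≥0∞) (g : En n → ℝ≥0∞) : ℝ≥0∞ :=
  if p = ∞ then
    ⨆ k : ℤ, (2 : ℝ≥0∞) ^ ((k : ℝ) * α) * sliceNorm n t r q ((shell n k).indicator g)
  else
    (∑' k : ℤ, ((2 : ℝ≥0∞) ^ ((k : ℝ) * α) * sliceNorm n t r q ((shell n k).indicator g)) ^ p.toReal) ^ (1 / p.toReal)

/-- Homogeneous Herz-slice norm of a complex-valued function. -/
def herzHomC (n : ℕ) (t r : ℝ) (q : ℝ≥0∞) (α : ℝ) (p : ℝ≥0∞) (f : En n → ℂ) : ℝ≥0∞ :=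
  herzHom n t r q α p fun y => (‖f y‖₊ : ℝ≥0∞)

/-- The `k`-th piece in the non-homogeneous decomposition: `B_0` for `k = 0`, `S_k` for `k ≥ 1`. -/
def pieceN (n : ℕ) (k : ℕ) : Set (En n) := if k = 0 then ballZ n 0 else shell n k

/-- Non-homogeneous Herz-slice norm of an `ℝ≥0∞`-valued function. -/
def herzNonHom (n : ℕ) (t r : ℝ) (q : ℝ≥0∞) (α : ℝ) (p : ℝ≥0∞) (g : En n → ℝ≥0∞) : ℝ≥0∞ :=
  if p = ∞ then
    ⨆ k : ℕ, (2 : ℝ≥0∞) ^ ((k : ℝ) * α) * sliceNorm n t r q ((pieceN n k).indicator g)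
  else
    (∑' k : ℕ, ((2 : ℝ≥0∞) ^ ((k : ℝ) * α) * sliceNorm n t r q ((pieceN n k).indicator g)) ^ p.toReal) ^ (1 / p.toReal)

/-- Non-homogeneous Herz-slice norm of a complex-valued function. -/
def herzNonHomC (n : ℕ) (t r : ℝ) (q : ℝ≥0∞) (α : ℝ) (p : ℝ≥0∞) (f : En n → ℂ) : ℝ≥0∞ :=
  herzNonHom n t r q α p fun y => (‖f y‖₊ : ℝ≥0∞)

/-- Hardy–Littlewood maximal operator. -/
def maximal (n : ℕ) (f : En n → ℂ) (x : En n) : ℝ≥0∞ :=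
  ⨆ (ρ : ℝ) (_ : 0 < ρ), (volume (ball x ρ))⁻¹ * ∫⁻ y in ball x ρ, (‖f y‖₊ : ℝ≥0∞)

/-!
Take `λ_k := 2^{kα} ‖f·1_{S_k}‖_{(E_r^q)_t}` and `b_k := λ_k⁻¹ f·1_{S_k}`. Each `b_k` is then a
block with constant `1`, and `∑ λ_k^p` is exactly the `p`-th power of the Herz-slice norm. The
shells `S_k` partition `ℝⁿ \ {0}`, so `f = ∑ λ_k b_k` away from the null set `{0}` and from the
shells with `λ_k = 0`; on those `f` vanishes a.e., because a slice norm can only vanish for a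
function that vanishes a.e.: by Fubini, `∫ ∫_{B(x,t)} |g|^r dy dx = |B(0,t)| ∫ |g|^r`.
-/

section BallAverage

variable {E : Type*} [NormedAddCommGroup E] [MeasurableSpace E] [BorelSpace E]
  [SecondCountableTopology E] {h : E → ℝ≥0∞}

theorem measurable_uncurry_ball_indicator (t : ℝ) (hh : Measurable h) :
    Measurable (Function.uncurry fun x y => (ball x t).indicator h y) := by
  have hs : MeasurableSet {p : E × E | dist p.2 p.1 < t} :=
    measurableSet_lt (by fun_prop) measurable_const
  exact (hh.comp measurable_snd).indicator hs

theorem measurable_setLIntegral_ball (μ : Measure E) [SFinite μ] (t : ℝ) (hh : Measurable h) :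
    Measurable fun x => ∫⁻ y in ball x t, h y ∂μ := by
  simp_rw [← lintegral_indicator measurableSet_ball]
  exact (measurable_uncurry_ball_indicator t hh).lintegral_prod_right'

theorem lintegral_setLIntegral_ball (μ : Measure E) [SFinite μ] [μ.IsAddHaarMeasure] (t : ℝ)
    (hh : Measurable h) :
    ∫⁻ x, ∫⁻ y in ball x t, h y ∂μ ∂μ = (∫⁻ y, h y ∂μ) * μ (ball 0 t) := by
  have hball : ∀ y, ∫⁻ x, (ball x t).indicator h y ∂μ = h y * μ (ball 0 t) := fun y => by
    have : (fun x => (ball x t).indicator h y) = (ball y t).indicator fun _ => h y := by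
      ext x; simp only [indicator, mem_ball, dist_comm]
    rw [this, lintegral_indicator_const measurableSet_ball, Measure.addHaar_ball_center]
  simp_rw [← lintegral_indicator measurableSet_ball]
  rw [lintegral_lintegral_swap (measurable_uncurry_ball_indicator t hh).aemeasurable]
  simp_rw [hball]
  exact lintegral_mul_const _ hh

end BallAverage

theorem rpow_one_div_lintegral_const_mul_rpow {α : Type*} [MeasurableSpace α] (μ : Measure α)
    {r : ℝ} (hr : 0 < r) {c : ℝ≥0∞} (hc : c ≠ ∞) (g : α → ℝ≥0∞) :
    (∫⁻ x, (c * g x) ^ r ∂μ) ^ (1 / r) = c * (∫⁻ x, g x ^ r ∂μ) ^ (1 / r) := by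
  simp_rw [ENNReal.mul_rpow_of_nonneg _ _ hr.le]
  rw [lintegral_const_mul' _ _ (ENNReal.rpow_ne_top_of_nonneg hr.le hc),
    ENNReal.mul_rpow_of_nonneg _ _ (by positivity), ← ENNReal.rpow_mul, mul_one_div_cancel hr.ne',
    ENNReal.rpow_one]

section SliceNorm

variable {n : ℕ} {t r : ℝ} {q : ℝ≥0∞}

theorem sliceNorm_const_mul (hr : 0 < r) (hq : 0 < q.toReal) {c : ℝ≥0∞} (hc : c ≠ ∞)
    (g : En n → ℝ≥0∞) : sliceNorm n t r q (fun y => c * g y) = c * sliceNorm n t r q g := by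
  have hq' : q ≠ ∞ := (ENNReal.toReal_pos_iff.mp hq).2.ne
  have hball : ∀ x : En n, ((volume (ball x t))⁻¹ * ∫⁻ y in ball x t, (c * g y) ^ r) ^ (1 / r)
      = c * ((volume (ball x t))⁻¹ * ∫⁻ y in ball x t, g y ^ r) ^ (1 / r) := fun x => by
    simpa only [lintegral_smul_measure, smul_eq_mul] using
      rpow_one_div_lintegral_const_mul_rpow ((volume (ball x t))⁻¹ • volume.restrict (ball x t))
        hr hc g
  simp only [sliceNorm, if_neg hq', hball, rpow_one_div_lintegral_const_mul_rpow _ hq hc]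

theorem ae_eq_zero_of_sliceNorm_eq_zero (ht : 0 < t) (hr : 0 < r) (hq : 0 < q.toReal)
    {g : En n → ℝ≥0∞} (hg : Measurable g) (h0 : sliceNorm n t r q g = 0) : g =ᵐ[volume] 0 := by
  have hq' : q ≠ ∞ := (ENNReal.toReal_pos_iff.mp hq).2.ne
  have hV : ∀ x : En n, volume (ball x t) = volume (ball (0 : En n) t) :=
    fun x => Measure.addHaar_ball_center volume x t
  have hV0 : (volume (ball (0 : En n) t))⁻¹ ≠ 0 := ENNReal.inv_ne_zero.mpr measure_ball_lt_top.ne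
  have hgr : Measurable fun y => g y ^ r := hg.pow_const r
  have hI := measurable_setLIntegral_ball volume t hgr
  simp only [sliceNorm, if_neg hq', hV, rpow_eq_zero_iff_of_pos (one_div_pos.mpr hq)] at h0
  rw [lintegral_eq_zero_iff (by fun_prop)] at h0
  have hI0 : (fun x => ∫⁻ y in ball x t, g y ^ r) =ᵐ[volume] 0 := by
    filter_upwards [h0] with x hx
    simpa only [Pi.zero_apply, rpow_eq_zero_iff_of_pos hq,
      rpow_eq_zero_iff_of_pos (one_div_pos.mpr hr), mul_eq_zero, hV0, false_or] using hx
  have hgr0 : (∫⁻ y, g y ^ r) * volume (ball (0 : En n) t) = 0 := by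
    rw [← lintegral_setLIntegral_ball volume t hgr]
    exact (lintegral_congr_ae hI0).trans lintegral_zero
  rw [mul_eq_zero, or_iff_left (measure_ball_pos volume _ ht).ne',
    lintegral_eq_zero_iff hgr] at hgr0
  filter_upwards [hgr0] with y hy
  simpa only [Pi.zero_apply, rpow_eq_zero_iff_of_pos hr] using hy

theorem sliceNormC_const_mul (hr : 0 < r) (hq : 0 < q.toReal) (c : ℂ) (f : En n → ℂ) :
    sliceNormC n t r q (fun y => c * f y) = ‖c‖₊ * sliceNormC n t r q f := by
  simp only [sliceNormC, nnnorm_mul, ENNReal.coe_mul]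
  exact sliceNorm_const_mul hr hq ENNReal.coe_ne_top _

theorem ae_eq_zero_of_sliceNormC_eq_zero (ht : 0 < t) (hr : 0 < r) (hq : 0 < q.toReal)
    {f : En n → ℂ} (hf : Measurable f) (h0 : sliceNormC n t r q f = 0) : f =ᵐ[volume] 0 := by
  filter_upwards [ae_eq_zero_of_sliceNorm_eq_zero ht hr hq (by fun_prop) h0] with y hy
  simpa using hy

end SliceNorm

section Shells

variable {n : ℕ}

theorem measurableSet_shell (k : ℤ) : MeasurableSet (shell n k) :=
  measurableSet_closedBall.diff measurableSet_closedBall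

theorem mem_shell_iff_ceil_logb_eq {x : En n} (hx : x ≠ 0) (k : ℤ) :
    x ∈ shell n k ↔ ⌈Real.logb 2 ‖x‖⌉ = k := by
  have hx' : 0 < ‖x‖ := norm_pos_iff.mpr hx
  rw [Int.ceil_eq_iff, Real.lt_logb_iff_rpow_lt one_lt_two hx',
    Real.logb_le_iff_le_rpow one_lt_two hx', ← Int.cast_one, ← Int.cast_sub,
    Real.rpow_intCast, Real.rpow_intCast]
  simp only [shell, ballZ, mem_sdiff, mem_closedBall, dist_zero_right, not_le]
  tauto

theorem tsum_shell_indicator {M : Type*} [AddCommMonoid M] [TopologicalSpace M] (f : En n → M)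
    {x : En n} (hx : x ≠ 0) : ∑' k, (shell n k).indicator f x = f x := by
  rw [tsum_eq_single ⌈Real.logb 2 ‖x‖⌉ fun k hk => indicator_of_notMem
    (fun h => hk ((mem_shell_iff_ceil_logb_eq hx k).mp h).symm) f]
  exact indicator_of_mem ((mem_shell_iff_ceil_logb_eq hx _).mpr rfl) f

end Shells

theorem herzHomC_rpow_toReal {n : ℕ} {t r α : ℝ} {q p : ℝ≥0∞} (hp : 0 < p.toReal)
    (f : En n → ℂ) : herzHomC n t r q α p f ^ p.toReal =
      ∑' k : ℤ, ((2 : ℝ≥0∞) ^ ((k : ℝ) * α) * sliceNormC n t r q ((shell n k).indicator f))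
        ^ p.toReal := by
  have hp' : p ≠ ∞ := (ENNReal.toReal_pos_iff.mp hp).2.ne
  simp only [herzHomC, herzHom, if_neg hp', ← ENNReal.rpow_mul, one_div_mul_cancel hp.ne',
    ENNReal.rpow_one, sliceNormC, nnnorm_indicator_eq_indicator_nnnorm, ENNReal.coe_indicator]

theorem ENNReal.coe_inv_toNNReal_mul_mul_le_inv {a b : ℝ≥0∞} (ha : a ≠ 0) (hab : a * b ≠ ∞) :
    ((((a * b).toNNReal)⁻¹ : ℝ≥0) : ℝ≥0∞) * b ≤ a⁻¹ := by
  rcases eq_or_ne b 0 with rfl | hb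
  · simp
  have hab0 : a * b ≠ 0 := mul_ne_zero ha hb
  rw [ENNReal.coe_inv ((ENNReal.toNNReal_pos hab0 hab).ne'), ENNReal.coe_toNNReal hab,
    ENNReal.mul_inv (.inl ha) (.inr hb), mul_assoc,
    ENNReal.inv_mul_cancel hb fun hb' => hab (hb' ▸ ENNReal.mul_top ha), mul_one]

section Blocks

variable (n : ℕ) (t r : ℝ) (q : ℝ≥0∞) (α : ℝ) (f : En n → ℂ)

def herzCoeff (k : ℤ) : ℝ≥0 :=
  ((2 : ℝ≥0∞) ^ ((k : ℝ) * α) * sliceNormC n t r q ((shell n k).indicator f)).toNNReal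

/-- Since `(0 : ℝ≥0)⁻¹ = 0`, the block vanishes wherever its coefficient does. -/
def herzBlock (k : ℤ) (y : En n) : ℂ :=
  (((herzCoeff n t r q α f k)⁻¹ : ℝ≥0) : ℂ) * (shell n k).indicator f y

variable {n t r q α f} {p : ℝ≥0∞}

theorem measurable_herzBlock (hf : Measurable f) (k : ℤ) : Measurable (herzBlock n t r q α f k) :=
  measurable_const.mul (hf.indicator (measurableSet_shell k))

theorem support_herzBlock_subset (k : ℤ) : Function.support (herzBlock n t r q α f k) ⊆ ballZ n k :=
  (Function.support_mul_subset_right _ _).trans (support_indicator_subset.trans sdiff_subset)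

theorem coe_herzCoeff (hp : 0 < p.toReal) (hfin : herzHomC n t r q α p f < ∞) (k : ℤ) :
    (herzCoeff n t r q α f k : ℝ≥0∞) =
      (2 : ℝ≥0∞) ^ ((k : ℝ) * α) * sliceNormC n t r q ((shell n k).indicator f) := by
  have hsum := herzHomC_rpow_toReal hp f ▸ (ENNReal.rpow_lt_top_of_nonneg hp.le hfin.ne).ne
  exact ENNReal.coe_toNNReal <| (ENNReal.rpow_eq_top_iff_of_pos hp).not.mp <|
    ENNReal.ne_top_of_tsum_ne_top hsum k

theorem tsum_herzCoeff_rpow (hp : 0 < p.toReal) (hfin : herzHomC n t r q α p f < ∞) :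
    ∑' k : ℤ, (herzCoeff n t r q α f k : ℝ≥0∞) ^ p.toReal = herzHomC n t r q α p f ^ p.toReal := by
  simp only [coe_herzCoeff hp hfin, herzHomC_rpow_toReal hp]

theorem sliceNormC_herzBlock_le (hr : 0 < r) (hq : 0 < q.toReal) (hp : 0 < p.toReal)
    (hfin : herzHomC n t r q α p f < ∞) (k : ℤ) :
    sliceNormC n t r q (herzBlock n t r q α f k) ≤ (2 : ℝ≥0∞) ^ (-(k : ℝ) * α) := by
  have hweight : (2 : ℝ≥0∞) ^ ((k : ℝ) * α) ≠ 0 :=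
    (ENNReal.rpow_pos two_pos ENNReal.ofNat_ne_top).ne'
  have hterm := coe_herzCoeff hp hfin k ▸ ENNReal.coe_ne_top
  unfold herzBlock
  rw [sliceNormC_const_mul hr hq, Complex.nnnorm_real, NNReal.nnnorm_eq, neg_mul,
    ENNReal.rpow_neg]
  exact ENNReal.coe_inv_toNNReal_mul_mul_le_inv hweight hterm

theorem herzCoeff_mul_herzBlock_ae_eq (ht : 0 < t) (hr : 0 < r) (hq : 0 < q.toReal)
    (hp : 0 < p.toReal) (hf : Measurable f) (hfin : herzHomC n t r q α p f < ∞) (k : ℤ) :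
    (fun x => ((herzCoeff n t r q α f k : ℝ) : ℂ) * herzBlock n t r q α f k x)
      =ᵐ[volume] (shell n k).indicator f := by
  rcases eq_or_ne (herzCoeff n t r q α f k) 0 with hk | hk
  · have hN : sliceNormC n t r q ((shell n k).indicator f) = 0 := by
      simpa [hk, eq_comm (a := (0 : ℝ≥0∞))] using coe_herzCoeff hp hfin k
    filter_upwards [ae_eq_zero_of_sliceNormC_eq_zero ht hr hq
      (hf.indicator (measurableSet_shell k)) hN] with x hx
    simp [hk, hx]
  · refine .of_forall fun x => ?_
    dsimp only [herzBlock]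
    rw [← mul_assoc, ← Complex.ofReal_mul, ← NNReal.coe_mul, mul_inv_cancel₀ hk,
      NNReal.coe_one, Complex.ofReal_one, one_mul]

theorem ae_eq_tsum_herzCoeff_mul_herzBlock (hn : 1 ≤ n) (ht : 0 < t) (hr : 0 < r)
    (hq : 0 < q.toReal) (hp : 0 < p.toReal) (hf : Measurable f)
    (hfin : herzHomC n t r q α p f < ∞) :
    ∀ᵐ x ∂(volume : Measure (En n)),
      f x = ∑' k : ℤ, ((herzCoeff n t r q α f k : ℝ) : ℂ) * herzBlock n t r q α f k x := by
  have : Nonempty (Fin n) := ⟨⟨0, hn⟩⟩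
  filter_upwards [ae_all_iff.mpr (herzCoeff_mul_herzBlock_ae_eq ht hr hq hp hf hfin),
    Measure.ae_ne volume 0] with x hblocks hx
  rw [← tsum_shell_indicator f hx]
  exact tsum_congr fun k => (hblocks k).symm

end Blocks

theorem homHerzSlice_block_decomposition_general
    (n : ℕ) (hn : 1 ≤ n) (α t r : ℝ) (ht : 0 < t) (hr : 1 < r)
    (p : ℝ≥0∞) (hp : 0 < p) (hp' : p ≠ ∞) (q : ℝ≥0∞) (hq : 1 ≤ q) (hq' : q ≠ ∞) :
    ∃ C₁ C₂ : ℝ≥0, 0 < C₁ ∧ 0 < C₂ ∧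
      ∀ f : En n → ℂ, Measurable f → herzHomC n t r q α p f < ∞ →
        ∃ (lam : ℤ → ℝ≥0) (b : ℤ → En n → ℂ),
          (∀ k, Measurable (b k)) ∧
          (∀ k, Function.support (b k) ⊆ ballZ n k) ∧
          (∀ k, sliceNormC n t r q (b k) ≤ (C₁ : ℝ≥0∞) * (2 : ℝ≥0∞) ^ (-(k : ℝ) * α)) ∧
          (∀ᵐ x ∂(volume : Measure (En n)), f x = ∑' k : ℤ, ((lam k : ℝ) : ℂ) * b k x) ∧
          ∑' k : ℤ, ((lam k : ℝ≥0∞)) ^ p.toReal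
            ≤ (C₂ : ℝ≥0∞) * herzHomC n t r q α p f ^ p.toReal := by
  have hpt : 0 < p.toReal := ENNReal.toReal_pos hp.ne' hp'
  have hqt : 0 < q.toReal := ENNReal.toReal_pos (zero_lt_one.trans_le hq).ne' hq'
  have hr0 : 0 < r := zero_lt_one.trans hr
  refine ⟨1, 1, one_pos, one_pos, fun f hf hfin =>
    ⟨herzCoeff n t r q α f, herzBlock n t r q α f, measurable_herzBlock hf,
      support_herzBlock_subset, fun k => ?_,
      ae_eq_tsum_herzCoeff_mul_herzBlock hn ht hr0 hqt hpt hf hfin, ?_⟩⟩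
  · simpa only [ENNReal.coe_one, one_mul] using sliceNormC_herzBlock_le hr0 hqt hpt hfin k
  · simpa only [ENNReal.coe_one, one_mul] using (tsum_herzCoeff_rpow hpt hfin).le

/-- block decomposition of the homogeneous Herz-slice space (direct direction). -/
theorem homHerzSlice_block_decomposition
    (n : ℕ) (hn : 1 ≤ n) (α t r : ℝ) (hα : 0 < α) (ht : 0 < t) (hr : 1 < r)
    (p : ℝ≥0∞) (hp : 0 < p) (hp' : p ≠ ∞) (q : ℝ≥0∞) (hq : 1 ≤ q) (hq' : q ≠ ∞) :
    ∃ C₁ C₂ : ℝ≥0, 0 < C₁ ∧ 0 < C₂ ∧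
      ∀ f : En n → ℂ, Measurable f → herzHomC n t r q α p f < ∞ →
        ∃ (lam : ℤ → ℝ≥0) (b : ℤ → En n → ℂ),
          (∀ k, Measurable (b k)) ∧
          (∀ k, Function.support (b k) ⊆ ballZ n k) ∧
          (∀ k, sliceNormC n t r q (b k) ≤ (C₁ : ℝ≥0∞) * (2 : ℝ≥0∞) ^ (-(k : ℝ) * α)) ∧
          (∀ᵐ x ∂(volume : Measure (En n)), f x = ∑' k : ℤ, ((lam k : ℝ) : ℂ) * b k x) ∧
          ∑' k : ℤ, ((lam k : ℝ≥0∞)) ^ p.toReal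
            ≤ (C₂ : ℝ≥0∞) * herzHomC n t r q α p f ^ p.toReal :=
  homHerzSlice_block_decomposition_general n hn α t r ht hr p hp hp' q hq hq'
end
end

section
/- Let n ≥ 1, α, t, p ∈ (0,∞), r ∈ (1,∞) and q ∈ [1,∞). There is a constant C > 0, independent of the data, such that: whenever (λ_k)_{k∈ℤ} are nonnegative reals with ∑_{k∈ℤ} λ_k^p < ∞, (b_k)_{k∈ℤ} are measurable functions with supp(b_k) ⊆ B_k and ‖b_k‖_{(E_r^q)_t} ≤ 2^{-kα} for every k ∈ ℤ, and f : ℝⁿ → ℂ satisfies f(x) = ∑_{k∈ℤ} λ_k b_k(x) with the series converging absolutely for almost every x, then ‖f‖_{(K̇E^{α,p}_{q,r})_t}^p ≤ C ∑_{k∈ℤ} λ_k^p; in particular f ∈ (K̇E^{α,p}_{q,r})_t(ℝⁿ). -/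
/-!
On the shell `S_k` only the blocks `b_j` with `j ≥ k` survive, because `supp b_j ⊆ B_j`. The slice
norm is an iterated Lebesgue norm (an `L^q` norm of local `L^r` averages), so Minkowski's inequality
for countable sums, applied twice, gives `2^{kα} ‖f 1_{S_k}‖ ≤ ∑_{m ≥ 0} 2^{-mα} λ_{k+m}`. Summing
`p`-th powers over `k` is then a discrete convolution estimate with a geometric kernel: for `p ≤ 1`
by subadditivity of `x ↦ x^p`, for `p ≥ 1` by Minkowski's inequality in `ℓ^p(ℤ)`.
-/

open MeasureTheory Metric Set ENNReal
open scoped NNReal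

noncomputable section

namespace ENNReal

lemma iSup_rpow {ι : Sort*} {c : ℝ} (hc : 0 < c) (f : ι → ℝ≥0∞) :
    (⨆ i, f i) ^ c = ⨆ i, f i ^ c :=
  (orderIsoRpow c hc).map_iSup f

lemma tsum_rpow_le_tsum_rpow {ι : Type*} {P : ℝ} (hP₀ : 0 < P) (hP₁ : P ≤ 1) (x : ι → ℝ≥0∞) :
    (∑' i, x i) ^ P ≤ ∑' i, x i ^ P := by
  rw [ENNReal.tsum_eq_iSup_sum, iSup_rpow hP₀]
  refine iSup_le fun s => le_trans ?_ (ENNReal.sum_le_tsum s)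
  exact Finset.le_sum_of_subadditive (· ^ P) (zero_rpow_of_pos hP₀).le
    (fun a b => rpow_add_le_add_rpow a b hP₀.le hP₁) s x

end ENNReal

namespace MeasureTheory

variable {α : Type*} [MeasurableSpace α] {μ : Measure α} {s : ℝ}

lemma eLpNorm'_iSup_of_monotone (hs : 0 < s) {g : ℕ → α → ℝ≥0∞} (hg : ∀ N, Measurable (g N))
    (hmono : Monotone g) : eLpNorm' (fun x => ⨆ N, g N x) s μ = ⨆ N, eLpNorm' (g N) s μ := by
  simp only [eLpNorm'_eq_lintegral_enorm, enorm_eq_self]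
  simp_rw [ENNReal.iSup_rpow hs]
  rw [lintegral_iSup (fun N => (hg N).pow_const s) fun N M h x =>
    ENNReal.rpow_le_rpow (hmono h x) hs.le, ENNReal.iSup_rpow (one_div_pos.2 hs)]

lemma eLpNorm'_tsum_le (hs : 1 ≤ s) {g : ℕ → α → ℝ≥0∞} (hg : ∀ j, Measurable (g j)) :
    eLpNorm' (fun x => ∑' j, g j x) s μ ≤ ∑' j, eLpNorm' (g j) s μ := by
  simp_rw [ENNReal.tsum_eq_iSup_nat]
  rw [eLpNorm'_iSup_of_monotone (zero_lt_one.trans_le hs)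
    (fun N => Finset.measurable_sum _ fun j _ => hg j)
    fun N M h x => Finset.sum_le_sum_of_subset (Finset.range_subset_range.2 h)]
  refine iSup_le fun N => le_iSup_of_le N ?_
  rw [← Finset.sum_fn]
  exact eLpNorm'_sum_le (fun j _ => (hg j).aestronglyMeasurable) hs

end MeasureTheory

section ShiftedSums

lemma tsum_comp_add_right {G M : Type*} [AddGroup G] [AddCommMonoid M] [TopologicalSpace M]
    (y : G → M) (m : G) : ∑' k, y (k + m) = ∑' k, y k :=
  (Equiv.addRight m).tsum_eq y

lemma tsum_eq_tsum_nat_add_of_lt {M : Type*} [AddCommMonoid M] [TopologicalSpace M] {g : ℤ → M}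
    {k : ℤ} (hg : ∀ j < k, g j = 0) : ∑' j, g j = ∑' m : ℕ, g (k + m) := by
  refine (Function.Injective.tsum_eq (fun a b h => by simpa using h) fun j hj => ?_).symm
  have hkj : k ≤ j := not_lt.1 (mt (hg j) hj)
  exact ⟨(j - k).toNat, show k + ((j - k).toNat : ℤ) = j by omega⟩

lemma tsum_two_rpow_neg_mul_ne_top {β : ℝ} (hβ : 0 < β) :
    ∑' m : ℕ, (2 : ℝ≥0∞) ^ (-(m : ℝ) * β) ≠ ∞ := by
  have hgeom (m : ℕ) : (2 : ℝ≥0∞) ^ (-(m : ℝ) * β) = (2 ^ (-β)) ^ m := by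
    rw [← rpow_natCast, ← rpow_mul, mul_comm, neg_mul, mul_neg]
  simp_rw [hgeom]
  exact (tsum_geometric_lt_top.2 (rpow_lt_one_of_one_lt_of_neg one_lt_two (neg_neg_of_pos hβ))).ne

variable {P : ℝ} (c : ℕ → ℝ≥0∞) (x : ℤ → ℝ≥0∞)

lemma tsum_rpow_tsum_shift_le_of_le_one (hP₀ : 0 < P) (hP₁ : P ≤ 1) :
    ∑' k : ℤ, (∑' m : ℕ, c m * x (k + m)) ^ P ≤ (∑' m, c m ^ P) * ∑' k, x k ^ P := by
  calc ∑' k : ℤ, (∑' m : ℕ, c m * x (k + m)) ^ P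
      ≤ ∑' k : ℤ, ∑' m : ℕ, c m ^ P * x (k + m) ^ P := by
        refine ENNReal.tsum_le_tsum fun k => (tsum_rpow_le_tsum_rpow hP₀ hP₁ _).trans_eq ?_
        simp_rw [mul_rpow_of_nonneg _ _ hP₀.le]
    _ = ∑' m : ℕ, c m ^ P * ∑' k : ℤ, x (k + m) ^ P := by
        rw [ENNReal.tsum_comm]
        simp_rw [ENNReal.tsum_mul_left]
    _ = (∑' m, c m ^ P) * ∑' k, x k ^ P := by
        simp_rw [tsum_comp_add_right fun k => x k ^ P, ENNReal.tsum_mul_right]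

lemma tsum_rpow_tsum_shift_le_of_one_le (hP : 1 ≤ P) :
    ∑' k : ℤ, (∑' m : ℕ, c m * x (k + m)) ^ P ≤ (∑' m, c m) ^ P * ∑' k, x k ^ P := by
  have hP₀ : 0 < P := zero_lt_one.trans_le hP
  have hnorm (y : ℤ → ℝ≥0∞) : eLpNorm' y P .count = (∑' k, y k ^ P) ^ (1 / P) := by
    simp [eLpNorm'_eq_lintegral_enorm, lintegral_count]
  have hterm (m : ℕ) : eLpNorm' (fun k => c m * x (k + m)) P .count
      = c m * (∑' k, x k ^ P) ^ (1 / P) := by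
    simp_rw [hnorm, mul_rpow_of_nonneg _ _ hP₀.le, ENNReal.tsum_mul_left,
      tsum_comp_add_right fun k => x k ^ P, mul_rpow_of_nonneg _ _ (one_div_pos.2 hP₀).le,
      ← rpow_mul, mul_one_div_cancel hP₀.ne', rpow_one]
  have hMinkowski := eLpNorm'_tsum_le (μ := .count) hP
    (g := fun m k => c m * x (k + m)) fun m => measurable_of_countable _
  rw [hnorm] at hMinkowski
  simp_rw [hterm, ENNReal.tsum_mul_right] at hMinkowski
  calc ∑' k : ℤ, (∑' m : ℕ, c m * x (k + m)) ^ P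
      = ((∑' k : ℤ, (∑' m : ℕ, c m * x (k + m)) ^ P) ^ (1 / P)) ^ P := by
        rw [← rpow_mul, one_div_mul_cancel hP₀.ne', rpow_one]
    _ ≤ ((∑' m, c m) * (∑' k, x k ^ P) ^ (1 / P)) ^ P := rpow_le_rpow hMinkowski hP₀.le
    _ = (∑' m, c m) ^ P * ∑' k, x k ^ P := by
        rw [mul_rpow_of_nonneg _ _ hP₀.le, ← rpow_mul, one_div_mul_cancel hP₀.ne', rpow_one]

lemma tsum_rpow_tsum_shift_le (hP₀ : 0 < P) :
    ∑' k : ℤ, (∑' m : ℕ, c m * x (k + m)) ^ P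
      ≤ ((∑' m, c m ^ P) + (∑' m, c m) ^ P) * ∑' k, x k ^ P := by
  rcases le_total P 1 with hP₁ | hP₁
  · exact (tsum_rpow_tsum_shift_le_of_le_one c x hP₀ hP₁).trans (by gcongr; exact le_self_add)
  · exact (tsum_rpow_tsum_shift_le_of_one_le c x hP₁).trans (by gcongr; exact le_add_self)

end ShiftedSums

lemma measurable_lintegral_ball {X : Type*} [PseudoMetricSpace X] [MeasurableSpace X]
    [OpensMeasurableSpace X] [SecondCountableTopology X] (μ : Measure X) [SFinite μ] (t : ℝ)
    {u : X → ℝ≥0∞} (hu : Measurable u) : Measurable fun x => ∫⁻ y in ball x t, u y ∂μ := by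
  have hball : MeasurableSet {p : X × X | dist p.2 p.1 < t} :=
    measurableSet_lt (measurable_snd.dist measurable_fst) measurable_const
  have hprod := ((hu.comp measurable_snd).indicator hball).lintegral_prod_right' (ν := μ)
  convert hprod using 2 with x
  rw [← lintegral_indicator measurableSet_ball]
  rfl

section SliceNorm

variable {n : ℕ} {t r : ℝ} {q : ℝ≥0∞}

def ballAverageMeasure (t : ℝ) (x : En n) : Measure (En n) :=
  (volume (ball x t))⁻¹ • volume.restrict (ball x t)

lemma sliceNorm_eq_eLpNorm' (hq_top : q ≠ ∞) (g : En n → ℝ≥0∞) :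
    sliceNorm n t r q g
      = eLpNorm' (fun x => eLpNorm' g r (ballAverageMeasure t x)) q.toReal volume := by
  simp [sliceNorm, hq_top, eLpNorm'_eq_lintegral_enorm, ballAverageMeasure, lintegral_smul_measure]

lemma measurable_eLpNorm'_ballAverageMeasure {g : En n → ℝ≥0∞} (hg : Measurable g) :
    Measurable fun x => eLpNorm' g r (ballAverageMeasure t x) := by
  simp only [eLpNorm'_eq_lintegral_enorm, enorm_eq_self, ballAverageMeasure,
    lintegral_smul_measure, Measure.addHaar_ball_center, smul_eq_mul]
  exact (measurable_const.mul (measurable_lintegral_ball _ t (hg.pow_const r))).pow_const _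

lemma sliceNorm_mono (hq_top : q ≠ ∞) (hr : 0 ≤ r) {g h : En n → ℝ≥0∞} (hgh : g ≤ᵐ[volume] h) :
    sliceNorm n t r q g ≤ sliceNorm n t r q h := by
  rw [sliceNorm_eq_eLpNorm' hq_top, sliceNorm_eq_eLpNorm' hq_top]
  refine eLpNorm'_mono_enorm_ae toReal_nonneg (.of_forall fun x => ?_)
  exact eLpNorm'_mono_enorm_ae hr
    (Measure.ae_smul_measure (ae_restrict_of_ae hgh) _)

lemma sliceNorm_const_mul_le (hq_top : q ≠ ∞) (hq₀ : q ≠ 0) (hr : 0 < r) (c : ℝ≥0)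
    (g : En n → ℝ≥0∞) :
    sliceNorm n t r q (fun y => c * g y) ≤ c * sliceNorm n t r q g := by
  rw [sliceNorm_eq_eLpNorm' hq_top, sliceNorm_eq_eLpNorm' hq_top]
  refine eLpNorm'_le_nnreal_smul_eLpNorm'_of_ae_le_mul' (.of_forall fun x => ?_)
    (toReal_pos hq₀ hq_top)
  exact eLpNorm'_le_nnreal_smul_eLpNorm'_of_ae_le_mul' (.of_forall fun y => le_rfl) hr

lemma sliceNorm_tsum_le (hq : 1 ≤ q) (hq_top : q ≠ ∞) (hr : 1 ≤ r) {g : ℕ → En n → ℝ≥0∞}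
    (hg : ∀ j, Measurable (g j)) :
    sliceNorm n t r q (fun y => ∑' j, g j y) ≤ ∑' j, sliceNorm n t r q (g j) := by
  have hQ : 1 ≤ q.toReal := by simpa using toReal_mono hq_top hq
  simp only [sliceNorm_eq_eLpNorm' hq_top]
  calc _ ≤ eLpNorm' (fun x => ∑' j, eLpNorm' (g j) r (ballAverageMeasure t x)) q.toReal volume :=
        eLpNorm'_mono_enorm_ae toReal_nonneg (.of_forall fun x => eLpNorm'_tsum_le hr hg)
    _ ≤ _ := eLpNorm'_tsum_le hQ fun j => measurable_eLpNorm'_ballAverageMeasure (hg j)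

end SliceNorm

section Herz

variable {n : ℕ} {t r α : ℝ} {q : ℝ≥0∞}

lemma ballZ_mono : Monotone (ballZ n) := fun _ _ hjk =>
  closedBall_subset_closedBall (zpow_le_zpow_right₀ one_le_two hjk)

lemma notMem_ballZ_of_mem_shell {j k : ℤ} (hjk : j < k) {x : En n} (hx : x ∈ shell n k) :
    x ∉ ballZ n j :=
  fun hxj => hx.2 (ballZ_mono (Int.le_sub_one_of_lt hjk) hxj)

lemma herzHom_rpow_toReal {p : ℝ≥0∞} (hp : p ≠ 0) (hp_top : p ≠ ∞) (g : En n → ℝ≥0∞) :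
    herzHom n t r q α p g ^ p.toReal
      = ∑' k : ℤ, (2 ^ ((k : ℝ) * α) * sliceNorm n t r q ((shell n k).indicator g)) ^ p.toReal := by
  rw [herzHom, if_neg hp_top, ← rpow_mul, one_div_mul_cancel (toReal_pos hp hp_top).ne', rpow_one]

lemma two_rpow_mul_sliceNorm_shell_le (hq : 1 ≤ q) (hq_top : q ≠ ∞) (hr : 1 ≤ r)
    {lam : ℤ → ℝ≥0} {b : ℤ → En n → ℂ} {f : En n → ℂ} (hb : ∀ k, Measurable (b k))
    (hsupp : ∀ k, Function.support (b k) ⊆ ballZ n k)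
    (hnorm : ∀ k, sliceNormC n t r q (b k) ≤ (2 : ℝ≥0∞) ^ (-(k : ℝ) * α))
    (hf : ∀ᵐ x ∂(volume : Measure (En n)), f x = ∑' k : ℤ, ((lam k : ℝ) : ℂ) * b k x) (k : ℤ) :
    2 ^ ((k : ℝ) * α) * sliceNorm n t r q ((shell n k).indicator fun y => (‖f y‖₊ : ℝ≥0∞))
      ≤ ∑' m : ℕ, 2 ^ (-(m : ℝ) * α) * (lam (k + m) : ℝ≥0∞) := by
  have hpt : (shell n k).indicator (fun y => (‖f y‖₊ : ℝ≥0∞))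
      ≤ᵐ[volume] fun y => ∑' m : ℕ, (lam (k + m) : ℝ≥0∞) * ‖b (k + m) y‖₊ := by
    filter_upwards [hf] with y hfy
    by_cases hy : y ∈ shell n k
    · rw [indicator_of_mem hy, ← tsum_eq_tsum_nat_add_of_lt
        (g := fun j => (lam j : ℝ≥0∞) * ‖b j y‖₊) fun j hj => ?_]
      · calc (‖f y‖₊ : ℝ≥0∞) = ‖∑' j, ((lam j : ℝ) : ℂ) * b j y‖ₑ := by rw [hfy]; rfl
          _ ≤ ∑' j, ‖((lam j : ℝ) : ℂ) * b j y‖ₑ := enorm_tsum_le_tsum_enorm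
          _ = ∑' j, (lam j : ℝ≥0∞) * ‖b j y‖₊ := by simp [enorm_eq_nnnorm, Complex.nnnorm_real]
      · have : b j y = 0 := Function.notMem_support.1 fun h =>
          notMem_ballZ_of_mem_shell hj hy (hsupp j h)
        simp [this]
    · simp [indicator_of_notMem hy]
  have hslice : sliceNorm n t r q ((shell n k).indicator fun y => (‖f y‖₊ : ℝ≥0∞))
      ≤ ∑' m : ℕ, (lam (k + m) : ℝ≥0∞) * 2 ^ (-((k + m : ℤ) : ℝ) * α) :=
    calc _ ≤ _ := sliceNorm_mono hq_top (by linarith) hpt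
      _ ≤ _ := sliceNorm_tsum_le hq hq_top hr fun m =>
        measurable_const.mul (hb _).nnnorm.coe_nnreal_ennreal
      _ ≤ _ := ENNReal.tsum_le_tsum fun m =>
        (sliceNorm_const_mul_le hq_top (by positivity) (by linarith) _ _).trans
          (by gcongr; exact hnorm _)
  calc _ ≤ 2 ^ ((k : ℝ) * α) * ∑' m : ℕ, (lam (k + m) : ℝ≥0∞) * 2 ^ (-((k + m : ℤ) : ℝ) * α) :=
        by gcongr
    _ = _ := by
      rw [← ENNReal.tsum_mul_left]
      refine tsum_congr fun m => ?_
      rw [mul_left_comm, mul_comm, ← rpow_add _ _ two_ne_zero ofNat_ne_top]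
      push_cast
      ring_nf

end Herz

theorem homHerzSlice_block_synthesis_general
    (n : ℕ) (α t r : ℝ) (hα : 0 < α) (hr : 1 < r)
    (p : ℝ≥0∞) (hp : 0 < p) (hp' : p ≠ ∞) (q : ℝ≥0∞) (hq : 1 ≤ q) (hq' : q ≠ ∞) :
    ∃ C : ℝ≥0, 0 < C ∧
      ∀ (lam : ℤ → ℝ≥0) (b : ℤ → En n → ℂ) (f : En n → ℂ),
        (∀ k, Measurable (b k)) →
        (∑' k : ℤ, ((lam k : ℝ≥0∞)) ^ p.toReal < ∞) →
        (∀ k, Function.support (b k) ⊆ ballZ n k) →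
        (∀ k, sliceNormC n t r q (b k) ≤ (2 : ℝ≥0∞) ^ (-(k : ℝ) * α)) →
        (∀ᵐ x ∂(volume : Measure (En n)),
          Summable (fun k : ℤ => (lam k : ℝ) * ‖b k x‖) ∧
          f x = ∑' k : ℤ, ((lam k : ℝ) : ℂ) * b k x) →
        herzHomC n t r q α p f ^ p.toReal
          ≤ (C : ℝ≥0∞) * ∑' k : ℤ, ((lam k : ℝ≥0∞)) ^ p.toReal := by
  set P := p.toReal
  have hP : 0 < P := toReal_pos hp.ne' hp'
  set c : ℕ → ℝ≥0∞ := fun m => 2 ^ (-(m : ℝ) * α)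
  set C := (∑' m, c m ^ P) + (∑' m, c m) ^ P
  have hC : C ≠ ∞ := by
    have hcP (m : ℕ) : c m ^ P = 2 ^ (-(m : ℝ) * (α * P)) := by rw [← rpow_mul, mul_assoc]
    simp_rw [C, hcP]
    exact add_ne_top.2 ⟨tsum_two_rpow_neg_mul_ne_top (mul_pos hα hP),
      rpow_ne_top_of_nonneg hP.le (tsum_two_rpow_neg_mul_ne_top hα)⟩
  have hC₀ : C ≠ 0 := ne_of_gt <| (by simp [c] : (0 : ℝ≥0∞) < c 0 ^ P).trans_le
    ((ENNReal.le_tsum 0).trans le_self_add)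
  refine ⟨C.toNNReal, toNNReal_pos hC₀ hC, fun lam b f hb _ hsupp hnorm hf => ?_⟩
  rw [herzHomC, herzHom_rpow_toReal hp.ne' hp', coe_toNNReal hC]
  calc _ ≤ ∑' k : ℤ, (∑' m : ℕ, c m * lam (k + m)) ^ P := ENNReal.tsum_le_tsum fun k =>
        rpow_le_rpow (two_rpow_mul_sliceNorm_shell_le hq hq' hr.le hb hsupp hnorm
          (hf.mono fun _ hx => hx.2) k) hP.le
    _ ≤ C * ∑' k, (lam k : ℝ≥0∞) ^ P := tsum_rpow_tsum_shift_le c _ hP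

/-- block decomposition of the homogeneous Herz-slice space (converse direction). -/
theorem homHerzSlice_block_synthesis
    (n : ℕ) (hn : 1 ≤ n) (α t r : ℝ) (hα : 0 < α) (ht : 0 < t) (hr : 1 < r)
    (p : ℝ≥0∞) (hp : 0 < p) (hp' : p ≠ ∞) (q : ℝ≥0∞) (hq : 1 ≤ q) (hq' : q ≠ ∞) :
    ∃ C : ℝ≥0, 0 < C ∧
      ∀ (lam : ℤ → ℝ≥0) (b : ℤ → En n → ℂ) (f : En n → ℂ),
        (∀ k, Measurable (b k)) →
        (∑' k : ℤ, ((lam k : ℝ≥0∞)) ^ p.toReal < ∞) →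
        (∀ k, Function.support (b k) ⊆ ballZ n k) →
        (∀ k, sliceNormC n t r q (b k) ≤ (2 : ℝ≥0∞) ^ (-(k : ℝ) * α)) →
        (∀ᵐ x ∂(volume : Measure (En n)),
          Summable (fun k : ℤ => (lam k : ℝ) * ‖b k x‖) ∧
          f x = ∑' k : ℤ, ((lam k : ℝ) : ℂ) * b k x) →
        herzHomC n t r q α p f ^ p.toReal
          ≤ (C : ℝ≥0∞) * ∑' k : ℤ, ((lam k : ℝ≥0∞)) ^ p.toReal :=
  homHerzSlice_block_synthesis_general n α t r hα hr p hp hp' q hq hq'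
end
end
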